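/- arXiv:2510.00343 — 3 statements merged into one kernel-verified Lean document; each statement's English description precedes it below -/
import Mathlib

section
/- Let n ≥ 1, m ≥ 1, and let X_1,…,X_n be i.i.d. random variables uniform on {1,…,2m}. Then the number of inversions I_{n,m} of the random permutation produced by an m-shelf shuffle of n cards satisfies the distributional identity I_{n,m} =_d Σ_{1≤i<k≤n} [ 1{X_i > X_k} + 1{X_i = X_k and X_i is even} ]. -/
open MeasureTheory ProbabilityTheory Finset Filter

/-- The uniform probability measure on a finite type. -/
noncomputable def uniformM (α : Type*) [Fintype α] [MeasurableSpace α] : Measure α :=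
  ((Fintype.card α : ENNReal))⁻¹ • Measure.count

/-- The pile label (in `{1, …, 2m}`) of card `i` under the pile assignment `w`
(pile indices in `Fin (2*m)` are 0-based, so pile `k` carries label `k + 1`).
Under the uniform measure on words, `fun w => Xval w i` are i.i.d. uniform on `{1, …, 2m}`. -/
def Xval {m n : ℕ} (w : Fin n → Fin (2*m)) (i : Fin n) : ℕ := (w i : ℕ) + 1

/-- Sorting key of card `i` in an `m`-shelf shuffle with pile assignment `w`:
cards are ordered first by pile label; within an odd-labeled pile they keep their
increasing order, and within an even-labeled pile their order is reversed. -/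
noncomputable def shelfKey {m n : ℕ} (w : Fin n → Fin (2*m)) (i : Fin n) :
    Lex (Fin (2*m) × ℤ) :=
  toLex (w i, if Even (Xval w i) then -(i : ℤ) else (i : ℤ))

/-- The permutation of `{1, …, n}` (0-based: of `Fin n`) produced by an `m`-shelf shuffle
with pile assignment `w`: position `p` of the shuffled deck holds card `shelfPerm w p`. -/
noncomputable def shelfPerm {m n : ℕ} (w : Fin n → Fin (2*m)) : Equiv.Perm (Fin n) :=
  Tuple.sort (shelfKey w)

/-- The number of inversions of a permutation: pairs `i < j` with `π i > π j`. -/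
def invCount {n : ℕ} (π : Equiv.Perm (Fin n)) : ℕ :=
  ((Finset.univ : Finset (Fin n × Fin n)).filter
    (fun p => p.1 < p.2 ∧ π p.2 < π p.1)).card

/-- `I_{n,m}`: the number of inversions after an `m`-shelf shuffle of `n` cards,
as a random variable on the space of pile-assignment words. -/
noncomputable def shelfInv (m n : ℕ) (w : Fin n → Fin (2*m)) : ℕ := invCount (shelfPerm w)

/-!
The shuffled deck is `Tuple.sort (shelfKey w)`, and the sorting permutation places card `k`
before card `i` exactly when `(shelfKey w k, k) < (shelfKey w i, i)` lexicographically. Hence a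
pair of cards `i < k` is inverted iff `shelfKey w k < shelfKey w i`, i.e. iff `X_k < X_i`, or
`X_i = X_k` and that pile is even (where the order of the cards is reversed). So `I_{n,m}` and
the sum of indicators agree for every pile assignment, not merely in distribution.
-/

theorem invCount_inv {n : ℕ} (π : Equiv.Perm (Fin n)) : invCount π⁻¹ = invCount π := by
  refine Finset.card_nbij' (fun p => (π⁻¹ p.2, π⁻¹ p.1)) (fun p => (π p.2, π p.1)) ?_ ?_ ?_ ?_ <;>
    simp +contextual [Set.MapsTo, Set.LeftInvOn]

theorem Tuple.sort_symm_lt_sort_symm_iff {n : ℕ} {α : Type*} [LinearOrder α] (f : Fin n → α)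
    (i k : Fin n) :
    (Tuple.sort f).symm k < (Tuple.sort f).symm i ↔ toLex (f k, k) < toLex (f i, i) := by
  have := ((Tuple.eq_sort_iff' (σ := Tuple.sort f)).1 rfl).lt_iff_lt
    (a := (Tuple.sort f).symm k) (b := (Tuple.sort f).symm i)
  simp only [Equiv.trans_apply, Equiv.apply_symm_apply] at this
  exact this.symm

theorem invCount_sort {n : ℕ} {α : Type*} [LinearOrder α] (f : Fin n → α) :
    invCount (Tuple.sort f) = #{p : Fin n × Fin n | p.1 < p.2 ∧ f p.2 < f p.1} := by
  rw [← invCount_inv, invCount]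
  refine congrArg card (filter_congr fun ⟨i, k⟩ _ => and_congr_right fun hik => ?_)
  rw [Equiv.Perm.inv_def, Tuple.sort_symm_lt_sort_symm_iff, Prod.Lex.toLex_lt_toLex]
  simp [hik.not_gt]

theorem shelfKey_lt_shelfKey_iff {m n : ℕ} (w : Fin n → Fin (2*m)) {i k : Fin n} (hik : i < k) :
    shelfKey w k < shelfKey w i ↔
      Xval w k < Xval w i ∨ (Xval w i = Xval w k ∧ Even (Xval w i)) := by
  unfold shelfKey Xval
  by_cases hw : w k = w i
  · simp only [hw, Prod.Lex.toLex_lt_toLex, lt_self_iff_false, true_and, false_or]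
    by_cases he : Even ((w i : ℕ) + 1)
    · simp only [he, if_true, neg_lt_neg_iff, Nat.cast_lt, Fin.val_fin_lt, hik]
    · simp only [he, if_false, Nat.cast_lt, Fin.val_fin_lt, hik.not_gt]
  · have hw' : (w k : ℕ) ≠ w i := Fin.val_ne_of_ne hw
    simp only [Prod.Lex.toLex_lt_toLex, hw, false_and, or_false, Fin.lt_def]
    omega

theorem shelfInv_eq_card {m n : ℕ} (w : Fin n → Fin (2*m)) :
    shelfInv m n w = #{p : Fin n × Fin n | p.1 < p.2 ∧
      (Xval w p.2 < Xval w p.1 ∨ (Xval w p.1 = Xval w p.2 ∧ Even (Xval w p.1)))} := by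
  rw [shelfInv, shelfPerm, invCount_sort]
  exact congrArg card (filter_congr fun p _ => and_congr_right (shelfKey_lt_shelfKey_iff w))

theorem shelf_inversions_distributional_identity_general (n m : ℕ) :
    Measure.map (fun w => shelfInv m n w) (uniformM (Fin n → Fin (2*m))) =
    Measure.map (fun w : Fin n → Fin (2*m) =>
        ∑ p ∈ (Finset.univ : Finset (Fin n × Fin n)).filter (fun p => p.1 < p.2),
          ((if Xval w p.2 < Xval w p.1 then 1 else 0)
            + (if Xval w p.1 = Xval w p.2 ∧ Even (Xval w p.1) then 1 else 0)))
      (uniformM (Fin n → Fin (2*m))) := by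
  congr 1
  funext w
  rw [shelfInv_eq_card, ← filter_filter, card_filter]
  refine sum_congr rfl fun p _ => ?_
  grind

/-- For `n ≥ 1`, `m ≥ 1`, with `X_1, …, X_n` i.i.d. uniform on `{1,…,2m}`
(realized as the coordinates of a uniform random word `w`), the number of inversions
`I_{n,m}` of the permutation produced by an `m`-shelf shuffle of `n` cards is equal in
distribution to `Σ_{1 ≤ i < k ≤ n} (1{X_i > X_k} + 1{X_i = X_k and X_i even})`. -/
theorem shelf_inversions_distributional_identity (n m : ℕ) (hn : 1 ≤ n) (hm : 1 ≤ m) :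
    Measure.map (fun w => shelfInv m n w) (uniformM (Fin n → Fin (2*m))) =
    Measure.map (fun w : Fin n → Fin (2*m) =>
        ∑ p ∈ (Finset.univ : Finset (Fin n × Fin n)).filter (fun p => p.1 < p.2),
          ((if Xval w p.2 < Xval w p.1 then 1 else 0)
            + (if Xval w p.1 = Xval w p.2 ∧ Even (Xval w p.1) then 1 else 0)))
      (uniformM (Fin n → Fin (2*m))) :=
  shelf_inversions_distributional_identity_general n m
end

section
/- For all n ≥ 1 and m ≥ 1, the expected number of inversions after an m-shelf shuffle of n cards is E[I_{n,m}] = n(n−1)/4. -/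
open MeasureTheory ProbabilityTheory Finset Filter

/-! The inversion count of a shuffle is the number of inversions of its sorting key, and for
cards `a < b` the event "`b` ends up before `a`" depends only on their piles `(w a, w b)`.
Reversing the pile order, `w ↦ Fin.rev ∘ w`, swaps this event with its complement, because
it also swaps the parity of the piles and hence their sorting direction. So every pair
`a < b` is inverted with probability exactly `1/2`, and the expectation is `(n choose 2) / 2`. -/

section Inversions

variable {n : ℕ} {α : Type*} [LinearOrder α]

def invPairs (f : Fin n → α) : Finset (Fin n × Fin n) :=
  {p | p.1 < p.2 ∧ f p.2 < f p.1}

theorem card_invPairs_of_strictMono_comp {f : Fin n → α} {σ : Equiv.Perm (Fin n)}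
    (hσ : StrictMono (f ∘ σ)) : #(invPairs σ) = #(invPairs f) := by
  refine card_nbij' (fun p => (σ p.2, σ p.1)) (fun p => (σ.symm p.2, σ.symm p.1))
    ?_ ?_ (fun _ _ => by simp) (fun _ _ => by simp)
  · rintro ⟨a, b⟩ hab
    simp only [invPairs, coe_filter, mem_univ, true_and, Set.mem_ofPred_eq] at hab ⊢
    exact ⟨hab.2, hσ hab.1⟩
  · rintro ⟨a, b⟩ hab
    simp only [invPairs, coe_filter, mem_univ, true_and, Set.mem_ofPred_eq] at hab ⊢
    refine ⟨hσ.lt_iff_lt.mp ?_, by simpa using hab.1⟩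
    simpa using hab.2

theorem card_invPairs_sort {f : Fin n → α} (hf : Function.Injective f) :
    #(invPairs (Tuple.sort f)) = #(invPairs f) :=
  card_invPairs_of_strictMono_comp
    ((Tuple.monotone_sort f).strictMono_of_injective (hf.comp (Tuple.sort f).injective))

end Inversions

theorem two_mul_card_filter_eq_card_of_swap_compl {β : Type*} [Fintype β] (P : β → Prop)
    [DecidablePred P] (e : β ≃ β) (he : ∀ x, P (e x) ↔ ¬ P x) :
    2 * #{x | P x} = Fintype.card β := by
  have hswap : #{x | P x} = #{x | ¬ P x} :=
    card_nbij' e e.symm (fun x hx => by simpa [he] using hx)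
      (fun y hy => by simpa [iff_not_comm.mp (he (e.symm y))] using hy)
      (fun _ _ => by simp) (fun _ _ => by simp)
  rw [two_mul, ← card_univ (α := β), ← card_filter_add_card_filter_not (s := univ) (p := P)]
  exact congrArg _ hswap

section Shelf

variable {m n : ℕ}

/-- Cards `a < b` placed in piles `x` and `y` come out in the order `b, a`. Piles are 0-based,
so the odd ones carry the even labels and are the reversed ones. -/
def PileInverts (x y : Fin (2 * m)) : Prop :=
  y < x ∨ (x = y ∧ Odd (x : ℕ))

instance (x y : Fin (2 * m)) : Decidable (PileInverts x y) := by
  unfold PileInverts; infer_instance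

theorem pileInverts_rev_iff (x y : Fin (2 * m)) : PileInverts x.rev y.rev ↔ ¬ PileInverts x y := by
  have hx := x.2
  have hy := y.2
  simp only [PileInverts, Fin.lt_def, Fin.ext_iff, Fin.val_rev, Nat.odd_iff]
  omega

theorem two_mul_card_pileInverts (a b : Fin n) :
    2 * #{w : Fin n → Fin (2 * m) | PileInverts (w a) (w b)} = (2 * m) ^ n := by
  rw [two_mul_card_filter_eq_card_of_swap_compl _ (Equiv.piCongrRight fun _ => Fin.revPerm)
    (fun w => pileInverts_rev_iff (w a) (w b))]
  simp

theorem shelfKey_injective (w : Fin n → Fin (2 * m)) : Function.Injective (shelfKey w) := by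
  intro i j h
  simp only [shelfKey, Xval, toLex_inj, Prod.mk.injEq] at h
  obtain ⟨hw, hkey⟩ := h
  simp only [hw] at hkey
  ext
  split_ifs at hkey <;> omega

theorem shelfKey_lt_shelfKey_iff_s1 (w : Fin n → Fin (2 * m)) {a b : Fin n} (hab : a < b) :
    shelfKey w b < shelfKey w a ↔ PileInverts (w a) (w b) := by
  rw [Fin.lt_def] at hab
  simp only [shelfKey, Xval, PileInverts, Prod.Lex.toLex_lt_toLex, Nat.even_add_one,
    Nat.not_even_iff_odd, Nat.odd_iff, Fin.lt_def, Fin.ext_iff]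
  split_ifs <;> omega

theorem invPairs_shelfKey (w : Fin n → Fin (2 * m)) :
    invPairs (shelfKey w) =
      ({p | p.1 < p.2 ∧ PileInverts (w p.1) (w p.2)} : Finset (Fin n × Fin n)) :=
  filter_congr fun _ _ => and_congr_right (shelfKey_lt_shelfKey_iff_s1 w)

theorem two_mul_sum_shelfInv (m n : ℕ) :
    2 * ∑ w, shelfInv m n w = n.choose 2 * (2 * m) ^ n := by
  set t : Finset (Fin n × Fin n) := {p | p.1 < p.2}
  let r (w : Fin n → Fin (2 * m)) (p : Fin n × Fin n) : Prop := PileInverts (w p.1) (w p.2)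
  have hinv (w) : shelfInv m n w = #(t.bipartiteAbove r w) := by
    rw [shelfInv, invCount, ← invPairs, shelfPerm, card_invPairs_sort (shelfKey_injective w),
      invPairs_shelfKey, bipartiteAbove, filter_filter]
  calc 2 * ∑ w, shelfInv m n w = ∑ p ∈ t, 2 * #(univ.bipartiteBelow r p) := by
        simp only [hinv, sum_card_bipartiteAbove_eq_sum_card_bipartiteBelow, mul_sum]
    _ = n.choose 2 * (2 * m) ^ n := by
        simp only [bipartiteBelow, r, two_mul_card_pileInverts, sum_const, smul_eq_mul, t,
          Fintype.card_product_filter_lt, Fintype.card_fin]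

end Shelf

theorem integral_uniformM {β : Type*} [Fintype β] [MeasurableSpace β] [MeasurableSingletonClass β]
    (f : β → ℝ) : ∫ x, f x ∂(uniformM β) = (∑ x, f x) / Fintype.card β := by
  rw [uniformM, integral_smul_measure, integral_fintype Integrable.of_finite]
  simp [div_eq_inv_mul, mul_sum]

theorem shelf_inversions_mean_general (n m : ℕ) (hm : 1 ≤ m) :
    ∫ w, (shelfInv m n w : ℝ) ∂(uniformM (Fin n → Fin (2*m))) = n * (n - 1) / 4 := by
  have hcard : ((2 * m) ^ n : ℝ) ≠ 0 := by
    have : (0 : ℝ) < m := by exact_mod_cast hm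
    positivity
  have hsum : 2 * ∑ w, (shelfInv m n w : ℝ) = n * (n - 1) / 2 * (2 * m) ^ n := by
    rw [← Nat.cast_choose_two]
    exact_mod_cast two_mul_sum_shelfInv m n
  rw [integral_uniformM, Fintype.card_fun, Fintype.card_fin, Fintype.card_fin]
  push_cast
  rw [div_eq_iff hcard]
  linarith

/-- For all `n ≥ 1` and `m ≥ 1`, the expected number of inversions after
an `m`-shelf shuffle of `n` cards is `E[I_{n,m}] = n(n−1)/4`. -/
theorem shelf_inversions_mean (n m : ℕ) (hn : 1 ≤ n) (hm : 1 ≤ m) :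
    ∫ w, (shelfInv m n w : ℝ) ∂(uniformM (Fin n → Fin (2*m))) = n * (n - 1) / 4 :=
  shelf_inversions_mean_general n m hm
end

section
/- Let n ≥ 1, m ≥ 1, and let X_1,…,X_n be i.i.d. uniform on {1,…,2m}. Then the statistic A_{n,m} = Σ_{1≤i<k≤n} 1{X_i > X_k} satisfies Var(A_{n,m}) = [n(n−1)(2n+5)/72] · [((2m)² − 1)/(2m)²]. -/
open MeasureTheory ProbabilityTheory Finset Filter

/-!
For two independent uniform labels `a, b ∈ {0, …, N-1}` put `Y = 1{b < a}` and
`θ = E Y = (N-1)/(2N)`. The Hájek projection of `Y` is `θ + φ a - φ b` with `φ a = a/N - θ`,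
and the residual `R = Y - θ - φ a + φ b` sums to zero in each argument. Summing over `i < k`,
`A - E A = ∑ᵢ (n - 1 - 2i) φ(Xᵢ) + ∑_{i<k} R(Xᵢ, X_k)`.
Every term here sums to zero in each variable it depends on, so terms with different supports
are orthogonal, and `Var A = (∑ᵢ (n - 1 - 2i)² + n(n-1)/2) · c` with
`c = E φ² = E R² = (N² - 1)/(12 N²)` and `∑ᵢ (n - 1 - 2i)² = n(n² - 1)/3`.
-/

section Uniform
variable {Ω : Type*} [Fintype Ω] [MeasurableSpace Ω]

instance [Nonempty Ω] : IsProbabilityMeasure (uniformM Ω) := by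
  constructor
  simp [uniformM, ENNReal.inv_mul_cancel]

variable [DiscreteMeasurableSpace Ω]

lemma integral_uniformM_s3 (f : Ω → ℝ) : ∫ ω, f ω ∂uniformM Ω = (∑ ω, f ω) / Fintype.card Ω := by
  simp [uniformM, integral_smul_measure, div_eq_inv_mul]

lemma variance_uniformM_add_const [Nonempty Ω] {g : Ω → ℝ} (hg : ∑ ω, g ω = 0) (c : ℝ) :
    variance (fun ω ↦ g ω + c) (uniformM Ω) = (∑ ω, g ω ^ 2) / Fintype.card Ω := by
  rw [variance_add_const .of_discrete, variance_of_integral_eq_zero .of_discrete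
    (by rw [integral_uniformM_s3, hg, zero_div]), integral_uniformM_s3]

end Uniform

section Degenerate
variable {ι α : Type*} [Fintype ι] [DecidableEq ι] [Fintype α]

lemma Fintype.sum_fun_eq_sum_funSplitAt (i : ι) (F : (ι → α) → ℝ) :
    ∑ w, F w = ∑ a, ∑ v : {j // j ≠ i} → α, F ((Equiv.funSplitAt i α).symm (a, v)) := by
  rw [← (Equiv.funSplitAt i α).symm.sum_comp, Fintype.sum_prod_type]

lemma Fintype.card_fun_eq_mul_card_funSplitAt (i : ι) :
    Fintype.card (ι → α) = Fintype.card α * Fintype.card ({j // j ≠ i} → α) := by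
  rw [Fintype.card_congr (Equiv.funSplitAt i α), Fintype.card_prod]

lemma sum_comp_eval_div_card [Nonempty α] (i : ι) (g : α → ℝ) :
    (∑ w : ι → α, g (w i)) / Fintype.card (ι → α) = (∑ a, g a) / Fintype.card α := by
  rw [Fintype.sum_fun_eq_sum_funSplitAt i, Fintype.card_fun_eq_mul_card_funSplitAt i]
  simp only [Equiv.funSplitAt_symm_apply, dif_pos, sum_const, card_univ, nsmul_eq_mul,
    ← Finset.mul_sum, Nat.cast_mul]
  field_simp

lemma sum_comp_eval₂_div_card [Nonempty α] {i j : ι} (hij : i ≠ j) (g : α → α → ℝ) :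
    (∑ w : ι → α, g (w i) (w j)) / Fintype.card (ι → α) =
      (∑ a, ∑ b, g a b) / Fintype.card α ^ 2 := by
  rw [Fintype.sum_fun_eq_sum_funSplitAt i, Fintype.card_fun_eq_mul_card_funSplitAt i]
  have h := fun a ↦ sum_comp_eval_div_card (⟨j, hij.symm⟩ : {j // j ≠ i}) (g a)
  simp only [Equiv.funSplitAt_symm_apply, dif_pos, dif_neg hij.symm, Nat.cast_mul]
  rw [mul_comm, ← div_div, Finset.sum_div]
  simp only [h, ← Finset.sum_div, div_div, sq]

def IsDegenerateOn (T : (ι → α) → ℝ) (S : Finset ι) : Prop :=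
  DependsOn T S ∧ ∀ i ∈ S, ∀ w, ∑ a, T (Function.update w i a) = 0

lemma sum_mul_eq_zero_of_sum_update_eq_zero {f H : (ι → α) → ℝ} (i : ι)
    (hf : ∀ w, ∑ a, f (Function.update w i a) = 0) (hH : DependsOn H {i}ᶜ) :
    ∑ w, f w * H w = 0 := by
  rw [Fintype.sum_fun_eq_sum_funSplitAt i, Finset.sum_comm]
  refine Finset.sum_eq_zero fun v _ ↦ ?_
  rcases isEmpty_or_nonempty α with hα | ⟨⟨a₀⟩⟩
  · simp
  set w := (Equiv.funSplitAt i α).symm (a₀, v)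
  have hw : ∀ a, (Equiv.funSplitAt i α).symm (a, v) = Function.update w i a := by
    intro a; ext j; by_cases h : j = i <;> simp [w, h, Function.update]
  have hHw : ∀ a, H (Function.update w i a) = H w := fun a ↦
    hH fun j hj ↦ Function.update_of_ne (by simpa using hj) _ _
  simp only [hw, hHw, ← Finset.sum_mul, hf, zero_mul]

lemma IsDegenerateOn.sum_mul_eq_zero {T T' : (ι → α) → ℝ} {S S' : Finset ι}
    (hT : IsDegenerateOn T S) (hT' : IsDegenerateOn T' S') (hSS' : S ≠ S') :
    ∑ w, T w * T' w = 0 := by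
  obtain ⟨i, hiS, hiS'⟩ | ⟨i, hiS', hiS⟩ : (∃ i ∈ S, i ∉ S') ∨ (∃ i ∈ S', i ∉ S) := by
    by_contra! h
    exact hSS' (Finset.Subset.antisymm h.1 h.2)
  · exact sum_mul_eq_zero_of_sum_update_eq_zero i (hT.2 i hiS)
      (hT'.1.mono (by simpa [Set.subset_compl_singleton_iff] using hiS'))
  · simp_rw [mul_comm (T _)]
    exact sum_mul_eq_zero_of_sum_update_eq_zero i (hT'.2 i hiS')
      (hT.1.mono (by simpa [Set.subset_compl_singleton_iff] using hiS))

lemma IsDegenerateOn.sum_eq_zero {T : (ι → α) → ℝ} {S : Finset ι} (hT : IsDegenerateOn T S)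
    (hS : S.Nonempty) : ∑ w, T w = 0 := by
  have h1 : IsDegenerateOn (fun _ : ι → α ↦ (1 : ℝ)) ∅ := ⟨by simp [DependsOn], by simp⟩
  simpa using hT.sum_mul_eq_zero h1 hS.ne_empty

lemma sum_sq_sum_of_isDegenerateOn {κ : Type*} (s : Finset κ) (T : κ → (ι → α) → ℝ)
    (S : κ → Finset ι) (hT : ∀ t ∈ s, IsDegenerateOn (T t) (S t)) (hS : Set.InjOn S s) :
    ∑ w, (∑ t ∈ s, T t w) ^ 2 = ∑ t ∈ s, ∑ w, T t w ^ 2 := by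
  simp only [sq, Finset.sum_mul_sum]
  rw [Finset.sum_comm]
  refine Finset.sum_congr rfl fun t ht ↦ ?_
  rw [Finset.sum_comm, Finset.sum_eq_single_of_mem t ht]
  intro t' ht' hne
  exact (hT t ht).sum_mul_eq_zero (hT t' ht') fun h ↦ hne (hS ht' ht h.symm)

end Degenerate

lemma Fin.sum_val_cast (N : ℕ) : ∑ a : Fin N, (a : ℝ) = N * (N - 1) / 2 := by
  induction N with
  | zero => simp
  | succ N ih =>
    rw [Fin.sum_univ_castSucc]
    simp only [Fin.val_castSucc, Fin.val_last, ih]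
    push_cast
    ring

lemma Fin.sum_val_cast_sq (N : ℕ) :
    ∑ a : Fin N, (a : ℝ) ^ 2 = N * (N - 1) * (2 * N - 1) / 6 := by
  induction N with
  | zero => simp
  | succ N ih =>
    rw [Fin.sum_univ_castSucc]
    simp only [Fin.val_castSucc, Fin.val_last, ih]
    push_cast
    ring

lemma Fin.sum_ite_lt {N : ℕ} (a : Fin N) : ∑ b : Fin N, (if b < a then 1 else 0 : ℝ) = a := by
  simp [Finset.sum_boole, Finset.filter_gt_eq_Iio]

lemma Fin.sum_ite_gt {N : ℕ} (b : Fin N) :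
    ∑ a : Fin N, (if b < a then 1 else 0 : ℝ) = N - 1 - b := by
  have hb := b.isLt
  simp only [Finset.sum_boole, Finset.filter_lt_eq_Ioi, Fin.card_Ioi]
  rw [Nat.cast_sub (by omega), Nat.cast_sub (by omega)]
  simp

section Kernel
variable (N : ℕ)

noncomputable def centeredRank (a : Fin N) : ℝ := (a - (N - 1) / 2) / N

noncomputable def inversionResidual (a b : Fin N) : ℝ :=
  (if b < a then 1 else 0) - (N - 1) / (2 * N) - centeredRank N a + centeredRank N b

variable {N}

lemma sum_centeredRank : ∑ a, centeredRank N a = 0 := by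
  unfold centeredRank
  rw [← Finset.sum_div (f := fun a : Fin N ↦ (a : ℝ) - (N - 1) / 2), Finset.sum_sub_distrib,
    Fin.sum_val_cast]
  simp only [sum_const, card_univ, Fintype.card_fin, nsmul_eq_mul]
  ring

lemma sum_centeredRank_sq (hN : N ≠ 0) :
    ∑ a, centeredRank N a ^ 2 = (N ^ 2 - 1) / (12 * N) := by
  have h : ∀ a : Fin N,
      centeredRank N a ^ 2 = ((a : ℝ) ^ 2 - (N - 1) * a + (N - 1) ^ 2 / 4) / N ^ 2 := by
    intro a; simp only [centeredRank]; ring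
  simp only [h, ← Finset.sum_div, Finset.sum_add_distrib, Finset.sum_sub_distrib,
    ← Finset.mul_sum, Fin.sum_val_cast, Fin.sum_val_cast_sq, sum_const, card_univ,
    Fintype.card_fin, nsmul_eq_mul]
  field_simp
  ring

lemma sum_inversionResidual_left (hN : N ≠ 0) (b : Fin N) :
    ∑ a, inversionResidual N a b = 0 := by
  simp only [inversionResidual, Finset.sum_add_distrib, Finset.sum_sub_distrib, sum_centeredRank,
    Fin.sum_ite_gt]
  simp only [sum_const, card_univ, Fintype.card_fin, nsmul_eq_mul, sub_zero, centeredRank]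
  field_simp
  ring

lemma sum_inversionResidual_right (hN : N ≠ 0) (a : Fin N) :
    ∑ b, inversionResidual N a b = 0 := by
  simp only [inversionResidual, Finset.sum_add_distrib, Finset.sum_sub_distrib, sum_centeredRank,
    Fin.sum_ite_lt]
  simp only [sum_const, card_univ, Fintype.card_fin, nsmul_eq_mul, add_zero, centeredRank]
  field_simp
  ring

lemma sum_inversionResidual_sq (hN : N ≠ 0) :
    ∑ a, ∑ b, inversionResidual N a b ^ 2 = (N ^ 2 - 1) / 12 := by
  set θ : ℝ := (N - 1) / (2 * N)
  -- `R` is orthogonal to constants and to functions of one argument, so `∑ R² = ∑ R Y`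
  have h_ortho : ∑ a, ∑ b, inversionResidual N a b ^ 2 =
      ∑ a, ∑ b, inversionResidual N a b * (if b < a then 1 else 0) := by
    have h : ∀ a b, inversionResidual N a b ^ 2 =
        inversionResidual N a b * (if b < a then 1 else 0) - θ * inversionResidual N a b
          - centeredRank N a * inversionResidual N a b
          + centeredRank N b * inversionResidual N a b := by
      intro a b; rw [sq]; nth_rewrite 1 [inversionResidual]; ring
    simp only [h, Finset.sum_add_distrib, Finset.sum_sub_distrib, ← Finset.mul_sum]
    rw [Finset.sum_comm (f := fun a b ↦ centeredRank N b * inversionResidual N a b)]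
    simp [← Finset.mul_sum, sum_inversionResidual_left hN, sum_inversionResidual_right hN]
  have h_ind : ∀ a b, inversionResidual N a b * (if b < a then 1 else 0) =
      (1 - θ - centeredRank N a) * (if b < a then 1 else 0)
        + centeredRank N b * (if b < a then 1 else 0) := by
    intro a b
    split_ifs with h <;> simp only [inversionResidual, θ, h, if_true, mul_one, mul_zero]
    ring
  have h_pt : ∀ a : Fin N, (1 - θ - centeredRank N a) * a + centeredRank N a * (N - 1 - a) =
      (1 - θ) * a - 2 * N * centeredRank N a ^ 2 := by
    intro a; simp only [centeredRank]; field_simp; ring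
  rw [h_ortho]
  simp only [h_ind, Finset.sum_add_distrib, ← Finset.mul_sum, Fin.sum_ite_lt]
  rw [Finset.sum_comm]
  simp only [← Finset.mul_sum, Fin.sum_ite_gt]
  rw [← Finset.sum_add_distrib]
  simp only [h_pt, Finset.sum_sub_distrib, ← Finset.mul_sum, Fin.sum_val_cast,
    sum_centeredRank_sq hN, θ]
  field_simp
  ring

end Kernel

local notation "ltPairs " n => Finset.filter (fun p : Fin n × Fin n ↦ Prod.fst p < Prod.snd p) univ

section Inversions
variable {n N : ℕ}

lemma sum_ltPairs_sub (u : Fin n → ℝ) :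
    ∑ p ∈ ltPairs n, (u p.1 - u p.2) = ∑ i, ((n : ℝ) - 1 - 2 * i) * u i := by
  have h : ∀ i j : Fin n, (if i < j then u i - u j else 0) =
      u i * (if i < j then 1 else 0) - u j * (if i < j then 1 else 0) := by
    intro i j; split_ifs <;> ring
  rw [Finset.sum_filter, Fintype.sum_prod_type]
  simp only [h, Finset.sum_sub_distrib, ← Finset.mul_sum, Fin.sum_ite_gt]
  rw [Finset.sum_comm (f := fun i j ↦ u j * _)]
  simp only [← Finset.mul_sum, Fin.sum_ite_lt, ← Finset.sum_sub_distrib]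
  exact Finset.sum_congr rfl fun i _ ↦ by ring

lemma card_ltPairs : (#(ltPairs n) : ℝ) = n * (n - 1) / 2 := by
  rw [Finset.card_filter, Nat.cast_sum, Fintype.sum_prod_type]
  simp only [Nat.cast_ite, Nat.cast_one, Nat.cast_zero, Fin.sum_ite_gt, Finset.sum_sub_distrib,
    Fin.sum_val_cast, sum_const, card_univ, Fintype.card_fin, nsmul_eq_mul]
  ring

lemma sum_sq_n_sub_one_sub_two_mul :
    ∑ i : Fin n, ((n : ℝ) - 1 - 2 * i) ^ 2 = (n : ℝ) * (n ^ 2 - 1) / 3 := by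
  have h : ∀ i : Fin n,
      ((n : ℝ) - 1 - 2 * i) ^ 2 = (n - 1 : ℝ) ^ 2 - 4 * (n - 1) * i + 4 * (i : ℝ) ^ 2 := by
    intro i; ring
  simp only [h, Finset.sum_add_distrib, Finset.sum_sub_distrib, ← Finset.mul_sum,
    Fin.sum_val_cast, Fin.sum_val_cast_sq, sum_const, card_univ, Fintype.card_fin, nsmul_eq_mul]
  ring

lemma isDegenerateOn_centeredRank (c : ℝ) (i : Fin n) :
    IsDegenerateOn (fun w : Fin n → Fin N ↦ c * centeredRank N (w i)) {i} := by
  refine ⟨fun x y h ↦ by simp [h i (by simp)], fun i' hi' w ↦ ?_⟩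
  rw [Finset.mem_singleton.mp hi']
  simp [← Finset.mul_sum, sum_centeredRank]

lemma isDegenerateOn_inversionResidual (hN : N ≠ 0) {i j : Fin n} (hij : i ≠ j) :
    IsDegenerateOn (fun w : Fin n → Fin N ↦ inversionResidual N (w i) (w j)) {i, j} := by
  refine ⟨fun x y h ↦ by simp [h i (by simp), h j (by simp)], fun k hk w ↦ ?_⟩
  rcases Finset.mem_insert.mp hk with rfl | hk
  · simp [hij.symm, sum_inversionResidual_left hN]
  · rw [Finset.mem_singleton.mp hk]
    simp [hij, sum_inversionResidual_right hN]

variable (n N) in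
noncomputable def inversionHajekTerm : Fin n ⊕ (Fin n × Fin n) → (Fin n → Fin N) → ℝ
  | .inl i => fun w ↦ ((n : ℝ) - 1 - 2 * i) * centeredRank N (w i)
  | .inr p => fun w ↦ inversionResidual N (w p.1) (w p.2)

def inversionHajekSupport : Fin n ⊕ (Fin n × Fin n) → Finset (Fin n)
  | .inl i => {i}
  | .inr p => {p.1, p.2}

lemma isDegenerateOn_inversionHajekTerm (hN : N ≠ 0) {t : Fin n ⊕ (Fin n × Fin n)}
    (ht : t ∈ (univ : Finset (Fin n)).disjSum (ltPairs n)) :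
    IsDegenerateOn (inversionHajekTerm n N t) (inversionHajekSupport t) := by
  cases t with
  | inl i => exact isDegenerateOn_centeredRank _ i
  | inr p =>
    have hp : p.1 < p.2 := by simpa using ht
    exact isDegenerateOn_inversionResidual hN hp.ne

lemma injOn_inversionHajekSupport : Set.InjOn inversionHajekSupport
    (((univ : Finset (Fin n)).disjSum (ltPairs n) : Finset _) : Set (Fin n ⊕ (Fin n × Fin n))) := by
  rintro (i | ⟨i, j⟩) ht (k | ⟨k, l⟩) ht' h <;>
    simp [inversionHajekSupport, Finset.ext_iff] at ht ht' h ⊢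
  · exact h
  · exact ht'.ne (((h k).mpr (.inl rfl)).trans ((h l).mpr (.inr rfl)).symm)
  · exact ht.ne (((h i).mp (.inl rfl)).trans ((h j).mp (.inr rfl)).symm)
  · have := (h i).mp (.inl rfl); have := (h j).mp (.inr rfl)
    have := (h k).mpr (.inl rfl); have := (h l).mpr (.inr rfl)
    grind

lemma sum_sum_inversionHajekTerm_eq_zero (hN : N ≠ 0) :
    ∑ w : Fin n → Fin N, ∑ t ∈ (univ : Finset (Fin n)).disjSum (ltPairs n),
      inversionHajekTerm n N t w = 0 := by
  rw [Finset.sum_comm]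
  exact Finset.sum_eq_zero fun t ht ↦ (isDegenerateOn_inversionHajekTerm hN ht).sum_eq_zero
    (by cases t <;> simp [inversionHajekSupport])

lemma sum_ltPairs_indicator_eq (w : Fin n → Fin N) :
    ∑ p ∈ ltPairs n, (if w p.2 < w p.1 then 1 else 0 : ℝ) =
      ∑ t ∈ (univ : Finset (Fin n)).disjSum (ltPairs n), inversionHajekTerm n N t w +
        #(ltPairs n) * ((N - 1) / (2 * N)) := by
  have h : ∀ p : Fin n × Fin n, (if w p.2 < w p.1 then 1 else 0 : ℝ) =
      (centeredRank N (w p.1) - centeredRank N (w p.2)) + inversionResidual N (w p.1) (w p.2)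
        + (N - 1) / (2 * N) := by
    intro p; simp only [inversionResidual]; ring
  simp only [h, Finset.sum_add_distrib, sum_ltPairs_sub (fun i ↦ centeredRank N (w i)),
    Finset.sum_disjSum, inversionHajekTerm, sum_const, nsmul_eq_mul]

lemma sum_sq_inversionHajekTerm_inl_div_card (hN : N ≠ 0) (i : Fin n) :
    (∑ w, inversionHajekTerm n N (.inl i) w ^ 2) / Fintype.card (Fin n → Fin N) =
      ((n : ℝ) - 1 - 2 * i) ^ 2 * ((N ^ 2 - 1) / (12 * N ^ 2)) := by
  have : NeZero N := ⟨hN⟩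
  simp only [inversionHajekTerm, mul_pow, ← Finset.mul_sum, mul_div_assoc,
    sum_comp_eval_div_card i (fun a ↦ centeredRank N a ^ 2), sum_centeredRank_sq hN,
    Fintype.card_fin]
  field_simp

lemma sum_sq_inversionHajekTerm_inr_div_card (hN : N ≠ 0) {p : Fin n × Fin n}
    (hp : p.1 ≠ p.2) :
    (∑ w, inversionHajekTerm n N (.inr p) w ^ 2) / Fintype.card (Fin n → Fin N) =
      (N ^ 2 - 1) / (12 * N ^ 2) := by
  have : NeZero N := ⟨hN⟩
  simp only [inversionHajekTerm,
    sum_comp_eval₂_div_card hp (fun a b ↦ inversionResidual N a b ^ 2),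
    sum_inversionResidual_sq hN, Fintype.card_fin]
  field_simp

end Inversions

theorem variance_A_general (n m : ℕ) (hm : 1 ≤ m) :
    variance (fun w : Fin n → Fin (2*m) =>
        ((∑ p ∈ (Finset.univ : Finset (Fin n × Fin n)).filter (fun p => p.1 < p.2),
          if Xval w p.2 < Xval w p.1 then (1 : ℕ) else 0 : ℕ) : ℝ))
      (uniformM (Fin n → Fin (2*m))) =
    (n * (n - 1) * (2 * n + 5) / 72) * (((2*m)^2 - 1) / (2*m)^2) := by
  have hN : 2 * m ≠ 0 := by omega
  have : NeZero (2 * m) := ⟨hN⟩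
  have hA : ∀ w : Fin n → Fin (2 * m),
      ((∑ p ∈ ltPairs n, if Xval w p.2 < Xval w p.1 then (1 : ℕ) else 0 : ℕ) : ℝ) =
        ∑ t ∈ (univ : Finset (Fin n)).disjSum (ltPairs n), inversionHajekTerm n (2 * m) t w +
          #(ltPairs n) * ((((2 * m : ℕ) : ℝ) - 1) / (2 * ((2 * m : ℕ) : ℝ))) := by
    intro w
    rw [← sum_ltPairs_indicator_eq]
    simp [Xval]
  simp only [hA]
  rw [variance_uniformM_add_const (sum_sum_inversionHajekTerm_eq_zero hN),
    sum_sq_sum_of_isDegenerateOn _ _ _ (fun t ht ↦ isDegenerateOn_inversionHajekTerm hN ht)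
      injOn_inversionHajekSupport,
    Finset.sum_div, Finset.sum_disjSum,
    Finset.sum_congr rfl fun i _ ↦ sum_sq_inversionHajekTerm_inl_div_card hN i,
    Finset.sum_congr rfl fun p hp ↦
      sum_sq_inversionHajekTerm_inr_div_card hN (Finset.mem_filter.mp hp).2.ne,
    ← Finset.sum_mul, sum_sq_n_sub_one_sub_two_mul, Finset.sum_const, nsmul_eq_mul, card_ltPairs]
  push_cast
  field_simp
  ring

/-- For `n ≥ 1`, `m ≥ 1`, with `X_1, …, X_n` i.i.d. uniform on `{1,…,2m}`,
the statistic `A_{n,m} = Σ_{1≤i<k≤n} 1{X_i > X_k}` has variance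
`n(n−1)(2n+5)/72 · ((2m)² − 1)/(2m)²`. -/
theorem variance_A (n m : ℕ) (hn : 1 ≤ n) (hm : 1 ≤ m) :
    variance (fun w : Fin n → Fin (2*m) =>
        ((∑ p ∈ (Finset.univ : Finset (Fin n × Fin n)).filter (fun p => p.1 < p.2),
          if Xval w p.2 < Xval w p.1 then (1 : ℕ) else 0 : ℕ) : ℝ))
      (uniformM (Fin n → Fin (2*m))) =
    (n * (n - 1) * (2 * n + 5) / 72) * (((2*m)^2 - 1) / (2*m)^2) :=
  variance_A_general n m hm
end
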